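/- arXiv:1404.4655 — 2 statements merged into one kernel-verified Lean document; each statement's English description precedes it below -/
import Mathlib

section
/- Let H̃ be a map assigning to each finite network (X, A_X) a quasi-ultrametric ũ_X on X, satisfying: (Ã1) for every two-node network ({p,q}, A) with A(p,q) = α > 0 and A(q,p) = β > 0 the output equals the input, and (Ã2) for every dissimilarity-reducing map φ : (X, A_X) → (Y, A_Y) one has ũ_X(x,x') ≥ ũ_Y(φ(x), φ(x')). Then for every network (X, A_X) and all x, x' ∈ X, ũ_X(x,x') equals the directed minimum chain cost ũ*_X(x,x') = min over chains from x to x' of the maximum link dissimilarity. -/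
/-!
Every quasi-ultrametric below `A` is bounded by `dmcc A`, being bounded by the cost of every chain.
The axiom of value, transported along the map from the two-node network `(A a b, A b a)` onto
`{a, b}`, shows `H A ≤ A`, hence `H A ≤ dmcc A`. Conversely, collapse `X` onto a two-node network by
separating the points that reach `x'` by a chain of cost below `δ = dmcc A x x'` from the others:
every link from the second class to the first costs at least `δ`, every link back at least the
separation of `A`, so the collapse is dissimilarity-reducing and the axioms give `δ ≤ H A x x'`.
-/

/-- The cost of a chain: maximum dissimilarity over consecutive links. -/
def chainCost {X : Type*} (A : X → X → ℝ) : List X → ℝ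
  | [] => 0
  | [_] => 0
  | a :: b :: rest => max (A a b) (chainCost A (b :: rest))

/-- The directed minimum chain cost `ũ*` of a network `(X, A)`: the minimum,
over all chains from `x` to `x'`, of the maximum link dissimilarity. -/
noncomputable def dmcc {X : Type*} (A : X → X → ℝ) (x x' : X) : ℝ :=
  sInf {r | ∃ c : List X, c.head? = some x ∧ c.getLast? = some x' ∧ chainCost A c = r}

section ChainCost

variable {X : Type*} {A : X → X → ℝ}

theorem chainCost_nonneg (hA : ∀ x x', 0 ≤ A x x') : ∀ c : List X, 0 ≤ chainCost A c
  | [] | [_] => le_rfl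
  | _ :: b :: rest => (chainCost_nonneg hA (b :: rest)).trans (le_max_right _ _)

theorem le_chainCost_of_isQuasiUltra {u : X → X → ℝ} (hself : ∀ a, u a a ≤ 0)
    (htri : ∀ a b c, u a c ≤ max (u a b) (u b c)) (hle : ∀ a b, u a b ≤ A a b) :
    ∀ {x x' : X} (c : List X), c.head? = some x → c.getLast? = some x' →
      u x x' ≤ chainCost A c
  | _, _, [], hx, _ => by simp at hx
  | _, _, [_], hx, hx' => by
      simp only [List.head?_cons, List.getLast?_singleton, Option.some.injEq] at hx hx'
      subst hx hx'
      exact hself _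
  | _, x', a :: b :: rest, hx, hx' => by
      simp only [List.head?_cons, Option.some.injEq] at hx
      subst hx
      rw [List.getLast?_cons_cons] at hx'
      calc u a x' ≤ max (u a b) (u b x') := htri a b x'
        _ ≤ max (A a b) (chainCost A (b :: rest)) :=
          max_le_max (hle a b) (le_chainCost_of_isQuasiUltra hself htri hle _ rfl hx')

theorem dmcc_le_chainCost (hA : ∀ x x', 0 ≤ A x x') {x x' : X} {c : List X}
    (hx : c.head? = some x) (hx' : c.getLast? = some x') : dmcc A x x' ≤ chainCost A c :=
  csInf_le ⟨0, fun _ ⟨c, _, _, hc⟩ => hc ▸ chainCost_nonneg hA c⟩ ⟨c, hx, hx', rfl⟩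

theorem le_dmcc_of_isQuasiUltra {u : X → X → ℝ} (hself : ∀ a, u a a ≤ 0)
    (htri : ∀ a b c, u a c ≤ max (u a b) (u b c)) (hle : ∀ a b, u a b ≤ A a b) (x x' : X) :
    u x x' ≤ dmcc A x x' :=
  le_csInf ⟨_, [x, x'], rfl, rfl, rfl⟩ fun _ ⟨c, hx, hx', hc⟩ =>
    hc ▸ le_chainCost_of_isQuasiUltra hself htri hle c hx hx'

theorem dmcc_self_nonpos (hA : ∀ x x', 0 ≤ A x x') (x : X) : dmcc A x x ≤ 0 :=
  dmcc_le_chainCost (c := [x]) hA rfl rfl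

theorem le_dmcc_of_ne {m : ℝ} (hm : 0 ≤ m) (hA : ∀ x x', 0 ≤ A x x')
    (hmA : ∀ z z', z ≠ z' → m ≤ A z z') {x x' : X} (hxx' : x ≠ x') : m ≤ dmcc A x x' := by
  classical
  -- the discrete quasi-ultrametric at scale `m` lies below `A`
  simpa [hxx'] using le_dmcc_of_isQuasiUltra (A := A) (u := fun z z' => if z = z' then 0 else m)
    (fun _ => by simp) (fun a b c => by split_ifs <;> simp_all)
    (fun z z' => by split_ifs with h; exacts [hA z z', hmA z z' h]) x x'

theorem exists_pos_le_of_ne [Finite X] (hA : ∀ x x', 0 ≤ A x x')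
    (hA₀ : ∀ x x', A x x' = 0 ↔ x = x') : ∃ m, 0 < m ∧ ∀ z z', z ≠ z' → m ≤ A z z' := by
  rcases isEmpty_or_nonempty {p : X × X // p.1 ≠ p.2} with hX | hX
  · exact ⟨1, one_pos, fun z z' h => (hX.false ⟨(z, z'), h⟩).elim⟩
  obtain ⟨p, hp⟩ := Finite.exists_min fun p : {p : X × X // p.1 ≠ p.2} => A p.1.1 p.1.2
  exact ⟨_, (hA _ _).lt_of_ne fun h => p.2 ((hA₀ _ _).1 h.symm), fun z z' h => hp ⟨(z, z'), h⟩⟩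

def ReachesBelow (A : X → X → ℝ) (r : ℝ) (x' z : X) : Prop :=
  ∃ c : List X, c.head? = some z ∧ c.getLast? = some x' ∧ chainCost A c < r

theorem reachesBelow_self {r : ℝ} (hr : 0 < r) (x' : X) : ReachesBelow A r x' x' :=
  ⟨[x'], rfl, rfl, hr⟩

theorem not_reachesBelow_dmcc (hA : ∀ x x', 0 ≤ A x x') (x x' : X) :
    ¬ ReachesBelow A (dmcc A x x') x' x :=
  fun ⟨_, hx, hx', hc⟩ => (dmcc_le_chainCost hA hx hx').not_gt hc

theorem le_of_reachesBelow_of_not_reachesBelow {r : ℝ} {x' z z' : X}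
    (hz' : ReachesBelow A r x' z') (hz : ¬ ReachesBelow A r x' z) : r ≤ A z z' := by
  obtain ⟨c, hc, hcx', hcr⟩ := hz'
  obtain ⟨rest, rfl⟩ := List.head?_eq_some_iff.1 hc
  by_contra! h
  exact hz ⟨z :: z' :: rest, rfl, by rwa [List.getLast?_cons_cons], max_lt h hcr⟩

end ChainCost

section TwoPoint

/-- The two-node network on `Bool` with `false → true` dissimilarity `α`, `true → false`
dissimilarity `β`. -/
def twoPoint (α β : ℝ) : Bool → Bool → ℝ
  | false, true => α
  | true, false => β
  | _, _ => 0

theorem twoPoint_nonneg {α β : ℝ} (hα : 0 ≤ α) (hβ : 0 ≤ β) (s t : Bool) :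
    0 ≤ twoPoint α β s t := by
  cases s <;> cases t <;> simp [twoPoint, hα, hβ]

theorem twoPoint_eq_zero_iff {α β : ℝ} (hα : α ≠ 0) (hβ : β ≠ 0) (s t : Bool) :
    twoPoint α β s t = 0 ↔ s = t := by
  cases s <;> cases t <;> simp [twoPoint, hα, hβ]

variable {X : Type*} {A : X → X → ℝ}

theorem apply_cond_le_twoPoint (hA : ∀ x, A x x = 0) (a b : X) (s t : Bool) :
    A (cond s b a) (cond t b a) ≤ twoPoint (A a b) (A b a) s t := by
  cases s <;> cases t <;> simp [twoPoint, hA]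

theorem twoPoint_decide_le {P : X → Prop} [DecidablePred P] {α β : ℝ}
    (hA : ∀ x x', 0 ≤ A x x') (hα : ∀ z z', ¬ P z → P z' → α ≤ A z z')
    (hβ : ∀ z z', P z → ¬ P z' → β ≤ A z z') (z z' : X) :
    twoPoint α β (decide (P z)) (decide (P z')) ≤ A z z' := by
  by_cases hz : P z <;> by_cases hz' : P z' <;> simp [twoPoint, hz, hz', hA, hα, hβ]

end TwoPoint

/-- Any hierarchical quasi-clustering method satisfying the
Directed Axiom of Value and the Directed Axiom of Transformation coincides
with directed single linkage (the directed minimum chain cost). -/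
theorem quasiClustering_uniqueness
    (H : ∀ (X : Type) [Fintype X], (X → X → ℝ) → X → X → ℝ)
    -- H outputs quasi-ultrametrics on every network
    (hvalid : ∀ (X : Type) [Fintype X] (A : X → X → ℝ),
      (∀ x x', 0 ≤ A x x') → (∀ x x', A x x' = 0 ↔ x = x') →
      (∀ x x', 0 ≤ H X A x x') ∧ (∀ x x', H X A x x' = 0 ↔ x = x') ∧
      (∀ x x' x'', H X A x x' ≤ max (H X A x x'') (H X A x'' x')))
    -- (Ã1) Directed Axiom of Value: on two-node networks the output is the input
    (hA1 : ∀ (X : Type) [Fintype X] (A : X → X → ℝ),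
      (∀ x x', 0 ≤ A x x') → (∀ x x', A x x' = 0 ↔ x = x') →
      ∀ p q : X, p ≠ q → (∀ z : X, z = p ∨ z = q) →
      ∀ x x', H X A x x' = A x x')
    -- (Ã2) Directed Axiom of Transformation
    (hA2 : ∀ (X Y : Type) [Fintype X] [Fintype Y]
      (AX : X → X → ℝ) (AY : Y → Y → ℝ),
      (∀ x x', 0 ≤ AX x x') → (∀ x x', AX x x' = 0 ↔ x = x') →
      (∀ y y', 0 ≤ AY y y') → (∀ y y', AY y y' = 0 ↔ y = y') →
      ∀ φ : X → Y, (∀ x x', AY (φ x) (φ x') ≤ AX x x') →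
      ∀ x x', H Y AY (φ x) (φ x') ≤ H X AX x x') :
    ∀ (X : Type) [Fintype X] (A : X → X → ℝ),
      (∀ x x', 0 ≤ A x x') → (∀ x x', A x x' = 0 ↔ x = x') →
      ∀ x x' : X, H X A x x' = dmcc A x x' := by
  intro X _ A hA hA₀ x x'
  classical
  obtain ⟨-, hH₀, hHtri⟩ := hvalid X A hA hA₀
  have hpos {a b : X} (h : a ≠ b) : 0 < A a b := (hA a b).lt_of_ne fun e => h ((hA₀ a b).1 e.symm)
  have hvalue {α β : ℝ} (hα : 0 < α) (hβ : 0 < β) : H Bool (twoPoint α β) false true = α :=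
    hA1 Bool _ (twoPoint_nonneg hα.le hβ.le) (twoPoint_eq_zero_iff hα.ne' hβ.ne') false true
      Bool.false_ne_true (by decide) false true
  have hH_le (a b : X) : H X A a b ≤ A a b := by
    rcases eq_or_ne a b with rfl | hab
    · exact ((hH₀ a a).2 rfl).trans_le (hA a a)
    simpa [hvalue (hpos hab) (hpos hab.symm)] using
      hA2 Bool X _ A (twoPoint_nonneg (hA a b) (hA b a))
        (twoPoint_eq_zero_iff (hpos hab).ne' (hpos hab.symm).ne') hA hA₀ (cond · b a)
        (apply_cond_le_twoPoint (fun z => (hA₀ z z).2 rfl) a b) false true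
  refine le_antisymm (le_dmcc_of_isQuasiUltra (fun a => ((hH₀ a a).2 rfl).le)
    (fun a b c => hHtri a c b) hH_le x x') ?_
  rcases eq_or_ne x x' with rfl | hxx'
  · exact (dmcc_self_nonpos hA x).trans ((hH₀ x x).2 rfl).ge
  obtain ⟨m, hm, hmA⟩ := exists_pos_le_of_ne hA hA₀
  have hδ : 0 < dmcc A x x' := hm.trans_le (le_dmcc_of_ne hm.le hA hmA hxx')
  let P := ReachesBelow A (dmcc A x x') x'
  simpa [P, hvalue hδ hm, not_reachesBelow_dmcc hA x x', reachesBelow_self hδ x'] using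
    hA2 X Bool A (twoPoint (dmcc A x x') m) hA hA₀ (twoPoint_nonneg hδ.le hm.le)
      (twoPoint_eq_zero_iff hδ.ne' hm.ne') (fun z => decide (P z))
      (twoPoint_decide_le hA (fun _ _ hz hz' => le_of_reachesBelow_of_not_reachesBelow hz' hz)
        (fun z z' hz hz' => hmA z z' fun h => hz' (h ▸ hz))) x x'
end

section
/- If two finite networks N_X = (X, A_X) and N_Y = (Y, A_Y) satisfy d_N(N_X, N_Y) = 0, then they are isomorphic: there exists a bijection φ : X → Y with A_X(x,x') = A_Y(φ(x), φ(x')) for all x, x' ∈ X. -/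
/-!
There are only finitely many correspondences, so the infimum defining `netDist` is attained:
some correspondence `R` has distortion `0`, i.e. preserves dissimilarities exactly. Since
dissimilarities vanish exactly on the diagonal, `(x, y), (x, y') ∈ R` forces
`A_Y(y, y') = A_X(x, x) = 0`, hence `y = y'`, and symmetrically. So `R` is the graph of a
bijection, and that bijection is an isomorphism.
-/

/-- A correspondence between `X` and `Y`: a relation projecting onto both. -/
def IsCorrespondence {X Y : Type*} (R : Set (X × Y)) : Prop :=
  (∀ x : X, ∃ y : Y, (x, y) ∈ R) ∧ (∀ y : Y, ∃ x : X, (x, y) ∈ R)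

/-- The distortion of a correspondence `R` between networks `(X, AX)` and
`(Y, AY)`. -/
noncomputable def distortion {X Y : Type*} (AX : X → X → ℝ) (AY : Y → Y → ℝ)
    (R : Set (X × Y)) : ℝ :=
  sSup {r | ∃ p ∈ R, ∃ q ∈ R, r = |AX p.1 q.1 - AY p.2 q.2|}

/-- The network distance: half the minimal distortion over correspondences. -/
noncomputable def netDist {X Y : Type*} (AX : X → X → ℝ) (AY : Y → Y → ℝ) : ℝ :=
  (1/2) * sInf {r | ∃ R : Set (X × Y), IsCorrespondence R ∧ r = distortion AX AY R}

section Correspondence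

variable {X Y : Type*}

theorem isCorrespondence_univ [Nonempty X] [Nonempty Y] :
    IsCorrespondence (Set.univ : Set (X × Y)) :=
  ⟨fun _ => ⟨Classical.arbitrary Y, trivial⟩, fun _ => ⟨Classical.arbitrary X, trivial⟩⟩

theorem IsCorrespondence.exists_equiv {R : Set (X × Y)} (hR : IsCorrespondence R)
    (hfun : ∀ x y y', (x, y) ∈ R → (x, y') ∈ R → y = y')
    (hinj : ∀ x x' y, (x, y) ∈ R → (x', y) ∈ R → x = x') :
    ∃ φ : X ≃ Y, ∀ x, (x, φ x) ∈ R := by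
  choose f hf using hR.1
  choose g hg using hR.2
  exact ⟨⟨f, g, fun x => hinj _ _ _ (hg (f x)) (hf x), fun y => hfun _ _ _ (hf (g y)) (hg y)⟩, hf⟩

end Correspondence

section Finite

variable {X Y : Type*} [Finite X] [Finite Y] (AX : X → X → ℝ) (AY : Y → Y → ℝ)

theorem abs_sub_le_distortion {R : Set (X × Y)} {p q : X × Y} (hp : p ∈ R) (hq : q ∈ R) :
    |AX p.1 q.1 - AY p.2 q.2| ≤ distortion AX AY R := by
  have hfin : {r | ∃ p ∈ R, ∃ q ∈ R, r = |AX p.1 q.1 - AY p.2 q.2|}.Finite :=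
    (Set.finite_range fun pq : (X × Y) × (X × Y) => |AX pq.1.1 pq.2.1 - AY pq.1.2 pq.2.2|).subset
      (by rintro r ⟨p, -, q, -, rfl⟩; exact ⟨(p, q), rfl⟩)
  exact le_csSup hfin.bddAbove ⟨p, hp, q, hq, rfl⟩

theorem eq_of_distortion_eq_zero {R : Set (X × Y)} (hR : distortion AX AY R = 0)
    {p q : X × Y} (hp : p ∈ R) (hq : q ∈ R) : AX p.1 q.1 = AY p.2 q.2 := by
  have h := abs_sub_le_distortion AX AY hp hq
  rw [hR] at h
  exact sub_eq_zero.mp (abs_nonpos_iff.mp h)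

theorem exists_isCorrespondence_distortion_eq [Nonempty X] [Nonempty Y] :
    ∃ R : Set (X × Y), IsCorrespondence R ∧ distortion AX AY R = 2 * netDist AX AY := by
  set T := {r | ∃ R : Set (X × Y), IsCorrespondence R ∧ r = distortion AX AY R}
  have hT : T.Nonempty := ⟨_, Set.univ, isCorrespondence_univ, rfl⟩
  have hfin : T.Finite :=
    (Set.finite_range (distortion AX AY)).subset (by rintro r ⟨R, -, rfl⟩; exact ⟨R, rfl⟩)
  obtain ⟨R, hR, hRT⟩ := hT.csInf_mem hfin
  refine ⟨R, hR, ?_⟩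
  rw [← hRT, netDist]
  ring

end Finite

theorem netDist_eq_zero_iso_general {X Y : Type*}
    [Fintype X] [Fintype Y] [Nonempty X] [Nonempty Y]
    (AX : X → X → ℝ) (AY : Y → Y → ℝ)
    (hXid : ∀ x x', AX x x' = 0 ↔ x = x')
    (hYid : ∀ y y', AY y y' = 0 ↔ y = y')
    (h : netDist AX AY = 0) :
    ∃ φ : X ≃ Y, ∀ x x', AX x x' = AY (φ x) (φ x') := by
  obtain ⟨R, hR, hRd⟩ := exists_isCorrespondence_distortion_eq AX AY
  rw [h, mul_zero] at hRd
  have hiso : ∀ {p q : X × Y}, p ∈ R → q ∈ R → AX p.1 q.1 = AY p.2 q.2 :=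
    eq_of_distortion_eq_zero AX AY hRd
  have hfun : ∀ x y y', (x, y) ∈ R → (x, y') ∈ R → y = y' := fun x y y' hy hy' =>
    (hYid y y').mp <| (hiso hy hy').symm.trans ((hXid x x).mpr rfl)
  have hinj : ∀ x x' y, (x, y) ∈ R → (x', y) ∈ R → x = x' := fun x x' y hx hx' =>
    (hXid x x').mp <| (hiso hx hx').trans ((hYid y y).mpr rfl)
  obtain ⟨φ, hφ⟩ := hR.exists_equiv hfun hinj
  exact ⟨φ, fun x x' => hiso (hφ x) (hφ x')⟩

/-- Networks at zero network distance are isomorphic. -/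
theorem netDist_eq_zero_iso {X Y : Type*}
    [Fintype X] [Fintype Y] [Nonempty X] [Nonempty Y]
    (AX : X → X → ℝ) (AY : Y → Y → ℝ)
    (hXnonneg : ∀ x x', 0 ≤ AX x x') (hXid : ∀ x x', AX x x' = 0 ↔ x = x')
    (hYnonneg : ∀ y y', 0 ≤ AY y y') (hYid : ∀ y y', AY y y' = 0 ↔ y = y')
    (h : netDist AX AY = 0) :
    ∃ φ : X ≃ Y, ∀ x x', AX x x' = AY (φ x) (φ x') :=
  netDist_eq_zero_iso_general AX AY hXid hYid h
end
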